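/- arXiv:2401.12153 — 11 statements merged into one kernel-verified Lean document; each statement's English description precedes it below -/
import Mathlib

section
/- Let A = {1,…,n} be a finite linearly ordered set and let G be any graph on A. Define ψ : A → B by ψ(x) = (x, χ_x) where χ_x(y) = 1 if x > y and {x,y} is not an edge of G, and χ_x(y) = 0 otherwise. Then ψ is a graph embedding of G into B, i.e., for all x ≠ y in A, {x,y} is an edge of G iff {ψ(x),ψ(y)} is an edge of B. -/
/-! For `x ≠ y` exactly one of `χ_x(y)`, `χ_y(x)` can be nonzero, namely the one at the larger
vertex, and it is nonzero exactly when `{x, y}` is not an edge. Hence `χ_x(y) + χ_y(x) = 0`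
in `ℤ/2` iff `{x, y}` is an edge of `G`. -/

/-- Vertices: pairs `(x, χ)` with `x ∈ A` and `χ : A \ {x} → ℤ/2`. -/
abbrev GVert (A : Type*) := Σ x : A, ({y : A // y ≠ x} → ZMod 2)

/-- Adjacency: `(x,χ)` and `(x',χ')` are adjacent iff `x ≠ x'` and `χ(x') + χ'(x) = 0`. -/
def GAdj {A : Type*} (p q : GVert A) : Prop :=
  ∃ h : p.1 ≠ q.1, p.2 ⟨q.1, Ne.symm h⟩ + q.2 ⟨p.1, h⟩ = 0

/-- The embedding `ψ` of a graph `G` on `A = {1,…,n}`: `ψ(x) = (x, χ_x)` where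
`χ_x(y) = 1` if `x > y` and `{x,y}` is not an edge of `G`, and `0` otherwise. -/
def psiG {n : ℕ} (G : SimpleGraph (Fin n)) [DecidableRel G.Adj]
    (x : Fin n) : GVert (Fin n) :=
  ⟨x, fun y => if y.1 < x ∧ ¬ G.Adj x y.1 then 1 else 0⟩

section

variable {n : ℕ} (G : SimpleGraph (Fin n)) [DecidableRel G.Adj]

lemma psiG_snd_add_psiG_snd {x y : Fin n} (h : x ≠ y) :
    (psiG G x).2 ⟨y, h.symm⟩ + (psiG G y).2 ⟨x, h⟩ = if G.Adj x y then 0 else 1 := by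
  rcases h.lt_or_gt with hxy | hyx
  · simp [psiG, hxy, hxy.not_gt, G.adj_comm y x]
  · simp [psiG, hyx, hyx.not_gt]

lemma gAdj_psiG_iff (x y : Fin n) : GAdj (psiG G x) (psiG G y) ↔ G.Adj x y := by
  refine ⟨fun ⟨h, hsum⟩ => ?_, fun hadj => ⟨hadj.ne, ?_⟩⟩
  · have hite : (if G.Adj x y then 0 else 1 : ZMod 2) = 0 :=
      (psiG_snd_add_psiG_snd G (x := x) (y := y) h).symm.trans hsum
    by_contra hna
    simp [hna] at hite
  · exact (psiG_snd_add_psiG_snd G hadj.ne).trans (if_pos hadj)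

end

theorem stmt4 {n : ℕ} (G : SimpleGraph (Fin n)) [DecidableRel G.Adj] :
    ∀ x y : Fin n, x ≠ y → (G.Adj x y ↔ GAdj (psiG G x) (psiG G y)) :=
  fun x y _ => (gAdj_psiG_iff G x y).symm
end

section
/- The class of all finite graphs has the extension property for partial automorphisms (EPPA): for every finite graph A there is a finite graph B containing A as an induced subgraph such that every isomorphism between two induced subgraphs of A extends to an automorphism of B. Moreover, one can take B to have |A|·2^{|A|-1} vertices. -/
/-!
Vertices of the witness over a type `α` are pairs `(a, χ)` with `χ : α → Bool` and `χ a = false`;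
`(a, χ)` and `(b, ψ)` are adjacent iff `a ≠ b` and `χ b ≠ ψ a`. A graph `G` on `α` embeds via
`a ↦ (a, χ a)` for any valuation `χ` such that `χ a b ≠ χ b a` exactly on the edges of `G`
(orient the edges along a linear order). Two kinds of maps are automorphisms: relabelling the
points by a permutation `σ`, and switching along a graph `E`, which flips `χ b` at `(a, χ)`
whenever `ab ∈ E`. A partial isomorphism `φ` of `G`, extended to a permutation `σ`, is realised by
the relabelling `σ` after the switch along `{ab | a ∈ dom φ, χ a b ≠ χ (σ a) (σ b)}`; this is a
symmetric relation on `dom φ` precisely because `φ` preserves adjacency.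
-/

lemma Bool.ne_iff_ne_of_ne_iff_ne {x y u v : Bool} (h : x ≠ y ↔ u ≠ v) : x ≠ u ↔ y ≠ v := by
  revert h; cases x <;> cases y <;> cases u <;> cases v <;> decide

lemma SimpleGraph.exists_adj_iff_of_irrefl_of_symmOn {α : Type*} {s : Set α} {D : α → α → Prop}
    (hD : ∀ a, ¬ D a a) (hs : ∀ a ∈ s, ∀ b ∈ s, D a b → D b a) :
    ∃ E : SimpleGraph α, ∀ a ∈ s, ∀ b, E.Adj a b ↔ D a b := by
  refine ⟨fromRel fun a b => a ∈ s ∧ D a b, fun a ha b => ?_⟩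
  rw [fromRel_adj]
  constructor
  · rintro ⟨-, ⟨-, h⟩ | ⟨hb, h⟩⟩
    exacts [h, hs b hb a ha h]
  · exact fun h => ⟨fun hab => hD a (hab ▸ h), .inl ⟨ha, h⟩⟩

open SimpleGraph Equiv

namespace EPPAWitness

variable {α : Type*}

abbrev Vertex (α : Type*) : Type _ := {p : α × (α → Bool) // p.2 p.1 = false}

def witness (α : Type*) : SimpleGraph (Vertex α) where
  Adj p q := p.1.1 ≠ q.1.1 ∧ p.1.2 q.1.1 ≠ q.1.2 p.1.1
  symm.symm _ _ h := ⟨h.1.symm, h.2.symm⟩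
  loopless.irrefl _ h := h.1 rfl

lemma witness_adj {p q : Vertex α} :
    (witness α).Adj p q ↔ p.1.1 ≠ q.1.1 ∧ p.1.2 q.1.1 ≠ q.1.2 p.1.1 := Iff.rfl

def relabel (σ : Perm α) : witness α ≃g witness α where
  toFun p := ⟨(σ p.1.1, p.1.2 ∘ σ.symm), by simp [p.2]⟩
  invFun p := ⟨(σ.symm p.1.1, p.1.2 ∘ σ), by simp [p.2]⟩
  left_inv p := by ext <;> simp
  right_inv p := by ext <;> simp
  map_rel_iff' := by simp [witness_adj]

def switch (E : SimpleGraph α) [DecidableRel E.Adj] : witness α ≃g witness α where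
  toFun p := ⟨(p.1.1, fun b => xor (p.1.2 b) (E.Adj p.1.1 b)), by simp [p.2]⟩
  invFun p := ⟨(p.1.1, fun b => xor (p.1.2 b) (E.Adj p.1.1 b)), by simp [p.2]⟩
  left_inv p := by ext <;> simp
  right_inv p := by ext <;> simp
  map_rel_iff' {p q} := by simp [witness_adj, E.adj_comm q.1.1]

lemma card_vertex [Fintype α] [DecidableEq α] :
    Fintype.card (Vertex α) = Fintype.card α * 2 ^ (Fintype.card α - 1) := by
  have h (a : α) : Fintype.card {χ : α → Bool // χ a = false} = 2 ^ (Fintype.card α - 1) := by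
    rw [Fintype.card_congr (((funSplitAt a Bool).subtypeEquiv (p := (· a = false))
      fun _ => Iff.rfl).trans (prodSubtypeFstEquivSubtypeProd (p := (· = false))))]
    simp
  rw [Fintype.card_congr (subtypeProdEquivSigmaSubtype fun a (χ : α → Bool) => χ a = false),
    Fintype.card_sigma]
  simp [h]

structure IsValuation (G : SimpleGraph α) (χ : α → α → Bool) : Prop where
  apply_self : ∀ a, χ a a = false
  adj_iff : ∀ a b, G.Adj a b ↔ a ≠ b ∧ χ a b ≠ χ b a

lemma exists_isValuation [LinearOrder α] (G : SimpleGraph α) : ∃ χ, IsValuation G χ := by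
  classical
  refine ⟨fun a b => a < b ∧ G.Adj a b, fun a => by simp, fun a b => ?_⟩
  rcases lt_trichotomy a b with h | rfl | h
  · simp [h, h.ne, h.not_gt]
  · simp
  · simp [h, h.ne', h.not_gt, G.adj_comm]

variable {G : SimpleGraph α} {χ : α → α → Bool}

def IsValuation.embedding (hχ : IsValuation G χ) : G ↪g witness α where
  toFun a := ⟨(a, χ a), hχ.apply_self a⟩
  inj' _ _ h := congrArg (·.1.1) h
  map_rel_iff' {a b} := (hχ.adj_iff a b).symm

lemma relabel_switch_embedding (hχ : IsValuation G χ) {σ : Perm α} {E : SimpleGraph α}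
    [DecidableRel E.Adj] {a : α} (hE : ∀ b, E.Adj a b ↔ χ a b ≠ χ (σ a) (σ b)) :
    relabel σ (switch E (hχ.embedding a)) = hχ.embedding (σ a) := by
  refine Subtype.ext (Prod.ext ?_ (funext fun c => ?_))
  · rfl
  obtain ⟨b, rfl⟩ := σ.surjective c
  show xor (χ a (σ.symm (σ b))) (E.Adj a (σ.symm (σ b))) = χ (σ a) (σ b)
  simp only [σ.symm_apply_apply, hE b]
  cases χ a b <;> cases χ (σ a) (σ b) <;> rfl

theorem exists_witness_iso_extending [Finite α] (hχ : IsValuation G χ) {s t : Set α}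
    (φ : G.induce s ≃g G.induce t) :
    ∃ Φ : witness α ≃g witness α,
      ∀ x (hx : x ∈ s), Φ (hχ.embedding x) = hχ.embedding (φ ⟨x, hx⟩) := by
  classical
  set σ := φ.toEquiv.extendSubtype
  have hσ (x) (hx : x ∈ s) : σ x = φ ⟨x, hx⟩ := φ.toEquiv.extendSubtype_apply_of_mem x hx
  have hadj (a) (ha : a ∈ s) (b) (hb : b ∈ s) : G.Adj (σ a) (σ b) ↔ G.Adj a b := by
    rw [hσ a ha, hσ b hb]
    exact φ.map_adj_iff
  obtain ⟨E, hE⟩ := exists_adj_iff_of_irrefl_of_symmOn (s := s)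
    (D := fun a b => χ a b ≠ χ (σ a) (σ b))
    (by simp [hχ.apply_self]) fun a ha b hb h => by
      obtain rfl | hne := eq_or_ne a b
      · exact h
      have hflip : χ a b ≠ χ b a ↔ χ (σ a) (σ b) ≠ χ (σ b) (σ a) := by
        simpa [hχ.adj_iff, hne, σ.injective.ne hne] using (hadj a ha b hb).symm
      exact (Bool.ne_iff_ne_of_ne_iff_ne hflip).mp h
  refine ⟨(switch E).trans (relabel σ), fun x hx => ?_⟩
  rw [← hσ x hx]
  exact relabel_switch_embedding hχ (hE x hx)

end EPPAWitness

open EPPAWitness in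
/-- EPPA for finite graphs (Hrushovski's theorem), with a witness of size
`|A| * 2^(|A|-1)`: for every finite graph `A` (on vertex set `Fin n`) there is a finite
graph `B` (on `Fin m` with `m = n * 2^(n-1)`) containing `A` as an induced subgraph such
that every isomorphism between two induced subgraphs of `A` extends to an automorphism
of `B`. -/
theorem stmt5 (n : ℕ) (G : SimpleGraph (Fin n)) :
    ∃ (m : ℕ) (H : SimpleGraph (Fin m)) (f : G ↪g H),
      m = n * 2 ^ (n - 1) ∧
      ∀ (s t : Set (Fin n)) (φ : G.induce s ≃g G.induce t),
        ∃ Φ : H ≃g H, ∀ (x : Fin n) (hx : x ∈ s), Φ (f x) = f (φ ⟨x, hx⟩).1 := by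
  obtain ⟨χ, hχ⟩ := exists_isValuation G
  have hcard : Fintype.card (Vertex (Fin n)) = n * 2 ^ (n - 1) := by
    simpa using card_vertex (α := Fin n)
  let e := (witness (Fin n)).overFinIso hcard
  refine ⟨_, _, e.toEmbedding.comp hχ.embedding, rfl, fun s t φ => ?_⟩
  obtain ⟨Φ, hΦ⟩ := exists_witness_iso_extending hχ φ
  exact ⟨(e.symm.trans Φ).trans e, fun x hx => by simp [hΦ x hx]⟩
end

section
/- Let A be a semigeneric tournament and X ≠ Y two parts of A. Then the relation ∼ on X defined by: x₁ ∼ x₂ iff for every y ∈ Y the edges x₁y and x₂y have the same orientation, is an equivalence relation on X with at most two equivalence classes. -/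
/-- Indicator of a proposition (classically). -/
noncomputable def eInd (p : Prop) : ℕ := @ite ℕ p (Classical.propDecidable p) 1 0

/-- A semigeneric tournament: an ω-partite tournament (vertices `V`, parts indexed by
`part : V → P`, exactly one directed edge between vertices in distinct parts, no edges
within a part) such that for every pair of parts `X`, `Y`, and all `a ≠ b ∈ X`,
`c ≠ d ∈ Y`, the number of edges directed from `{a,b}` to `{c,d}` is even. -/
structure Semigeneric (V : Type*) (P : Type*) where
  part : V → P
  E : V → V → Prop
  not_edge_same : ∀ u v, part u = part v → ¬ E u v
  total : ∀ u v, part u ≠ part v → E u v ∨ E v u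
  asymm : ∀ u v, E u v → ¬ E v u
  even : ∀ a b c d, a ≠ b → c ≠ d → part a = part b → part c = part d →
    part a ≠ part c →
    Even (eInd (E a c) + eInd (E a d) + eInd (E b c) + eInd (E b d))

/-- The canonical equivalence: `x ∼ y` iff `x, y` lie in the same part and are connected
in the same direction to every vertex outside that part. -/
def canSim {V P : Type*} (T : Semigeneric V P) (x y : V) : Prop :=
  T.part x = T.part y ∧ ∀ w, T.part w ≠ T.part x → (T.E x w ↔ T.E y w)

/-!
Parity of four edges between two parts `X ≠ Y` means that whether two vertices of `X` agree on a
vertex `c ∈ Y` does not depend on `c`: any two vertices of `X` agree on all of `Y` or disagree on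
all of `Y`. Of three vertices of `X`, two must then agree, since a single edge orientation cannot
differ from two others that differ from each other.
-/

lemma even_eInd_add_iff (p q s t : Prop) :
    Even (eInd p + eInd q + eInd s + eInd t) ↔ ((p ↔ s) ↔ (q ↔ t)) := by
  unfold eInd
  by_cases hp : p <;> by_cases hq : q <;> by_cases hs : s <;> by_cases ht : t <;>
    simp [hp, hq, hs, ht, Nat.even_iff]

namespace Semigeneric

variable {V P : Type*} (T : Semigeneric V P)

lemma agree_iff_agree {a b c d : V} (hab : T.part a = T.part b) (hcd : T.part c = T.part d)
    (hac : T.part a ≠ T.part c) :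
    (T.E a c ↔ T.E b c) ↔ (T.E a d ↔ T.E b d) := by
  rcases eq_or_ne a b with rfl | hab'
  · simp
  rcases eq_or_ne c d with rfl | hcd'
  · rfl
  exact (even_eInd_add_iff _ _ _ _).mp (T.even a b c d hab' hcd' hab hcd hac)

lemma agree_on_or_disagree_on {a b : V} {Y : P} (hab : T.part a = T.part b)
    (haY : T.part a ≠ Y) :
    (∀ w, T.part w = Y → (T.E a w ↔ T.E b w)) ∨
      ∀ w, T.part w = Y → ¬(T.E a w ↔ T.E b w) := by
  by_cases h : ∃ c, T.part c = Y ∧ (T.E a c ↔ T.E b c)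
  · obtain ⟨c, hc, hagree⟩ := h
    exact .inl fun w hw =>
      (T.agree_iff_agree hab (hc.trans hw.symm) (hc ▸ haY)).mp hagree
  · exact .inr fun w hw hagree => h ⟨w, hw, hagree⟩

end Semigeneric

theorem stmt7 {V P : Type*} (T : Semigeneric V P) (X Y : P) (hXY : X ≠ Y)
    (r : {x : V // T.part x = X} → {x : V // T.part x = X} → Prop)
    (hr : ∀ x₁ x₂, r x₁ x₂ ↔ ∀ y : V, T.part y = Y → (T.E x₁.1 y ↔ T.E x₂.1 y)) :
    Equivalence r ∧ ∀ x y z, r x y ∨ r x z ∨ r y z := by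
  obtain rfl : r = fun x₁ x₂ => ∀ y : V, T.part y = Y → (T.E x₁.1 y ↔ T.E x₂.1 y) :=
    funext₂ fun x₁ x₂ => propext (hr x₁ x₂)
  refine ⟨⟨fun _ _ _ => Iff.rfl, fun h w hw => (h w hw).symm,
    fun h₁ h₂ w hw => (h₁ w hw).trans (h₂ w hw)⟩, fun x y z => ?_⟩
  have dichotomy (a b : {x : V // T.part x = X}) :=
    T.agree_on_or_disagree_on (a.2.trans b.2.symm) (a.2 ▸ hXY)
  rcases dichotomy x y with hxy | hxy
  · exact .inl hxy
  rcases dichotomy x z with hxz | hxz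
  · exact .inr (.inl hxz)
  exact .inr (.inr fun w hw => by have := hxy w hw; have := hxz w hw; tauto)
end

section
/- Let A be a semigeneric tournament and ∼ the canonical equivalence relation (x ∼ y iff x,y are in the same part and are connected in the same direction to every vertex outside that part). Define the quotient directed graph A/∼ on the equivalence classes, with an edge from [u] to [v] iff there is an edge from u to v in A (for some, equivalently any, representatives). Then A/∼ is a well-defined semigeneric tournament, the quotient map u ↦ [u] is a homomorphism such that [u][v] being an edge implies uv is an edge, and every automorphism f of A induces a well-defined automorphism [u] ↦ [f(u)] of A/∼. -/
lemma edge_iff_not_rev {V P : Type*} (T : Semigeneric V P) {u v : V}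
    (h : T.part u ≠ T.part v) : T.E u v ↔ ¬ T.E v u := by
  constructor
  · exact fun h1 h2 => T.asymm _ _ h2 h1
  · intro h1
    rcases T.total u v h with h2 | h2
    · exact h2
    · exact absurd h2 h1

lemma canSim_well {V P : Type*} (T : Semigeneric V P) {u u' v v' : V}
    (hu : canSim T u u') (hv : canSim T v v') : T.E u v ↔ T.E u' v' := by
  by_cases h : T.part u = T.part v
  · have h1 : T.part u' = T.part v' := hu.1 ▸ hv.1 ▸ h
    simp [T.not_edge_same _ _ h, T.not_edge_same _ _ h1]
  · have h1 : T.part u' ≠ T.part v := hu.1 ▸ h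
    have h2 : T.part u' ≠ T.part v' := hv.1 ▸ h1
    have e1 : T.E u v ↔ T.E u' v := hu.2 v (fun hc => h hc.symm)
    have e2 : T.E v u' ↔ T.E v' u' := hv.2 u' (fun hc => h1 hc)
    rw [e1, edge_iff_not_rev T h1, e2, ← edge_iff_not_rev T h2]

lemma part_eq_of_auto {V P : Type*} (T : Semigeneric V P) (f : V ≃ V)
    (hf : ∀ u v, T.E (f u) (f v) ↔ T.E u v) {x y : V}
    (h : T.part x = T.part y) : T.part (f x) = T.part (f y) := by
  by_contra hne
  rcases T.total (f x) (f y) hne with h1 | h1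
  · exact T.not_edge_same x y h ((hf x y).mp h1)
  · exact T.not_edge_same y x h.symm ((hf y x).mp h1)

lemma canSim_auto {V P : Type*} (T : Semigeneric V P) (f : V ≃ V)
    (hf : ∀ u v, T.E (f u) (f v) ↔ T.E u v) {x y : V}
    (h : canSim T x y) : canSim T (f x) (f y) := by
  refine ⟨part_eq_of_auto T f hf h.1, fun w hw => ?_⟩
  have hw' : T.part (f.symm w) ≠ T.part x := by
    intro hc
    exact hw (by simpa using part_eq_of_auto T f hf hc)
  have := h.2 (f.symm w) hw'
  have hx := hf x (f.symm w)
  have hy := hf y (f.symm w)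
  simp only [Equiv.apply_symm_apply] at hx hy
  rw [hx, hy]
  exact this

theorem stmt9 {V P : Type*} (T : Semigeneric V P) (s : Setoid V)
    (hs : ∀ x y, s.r x y ↔ canSim T x y) :
    ∃ T' : Semigeneric (Quotient s) P,
      (∀ u, T'.part (Quotient.mk s u) = T.part u) ∧
      (∀ u v, ¬ canSim T u v →
        (T'.E (Quotient.mk s u) (Quotient.mk s v) ↔ T.E u v)) ∧
      (∀ u v, T'.E (Quotient.mk s u) (Quotient.mk s v) → T.E u v) ∧
      ∀ f : V ≃ V, (∀ u v, T.E (f u) (f v) ↔ T.E u v) →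
        ∃ F : Quotient s ≃ Quotient s,
          (∀ u, F (Quotient.mk s u) = Quotient.mk s (f u)) ∧
          ∀ p q, T'.E (F p) (F q) ↔ T'.E p q := by
  have hpart : ∀ (a b : V), a ≈ b → T.part a = T.part b := by
    intro a b h
    exact ((hs a b).mp h).1
  have hE : ∀ (a b c d : V), a ≈ c → b ≈ d → T.E a b = T.E c d := by
    intro a b c d h1 h2
    exact propext (canSim_well T ((hs a c).mp h1) ((hs b d).mp h2))
  refine ⟨{
    part := Quotient.lift T.part hpart
    E := Quotient.lift₂ T.E hE
    not_edge_same := ?_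
    total := ?_
    asymm := ?_
    even := ?_ }, fun u => rfl, fun u v _ => Iff.rfl, fun u v h => h, ?_⟩
  · intro u v
    induction u using Quotient.ind
    induction v using Quotient.ind
    exact T.not_edge_same _ _
  · intro u v
    induction u using Quotient.ind
    induction v using Quotient.ind
    exact T.total _ _
  · intro u v
    induction u using Quotient.ind
    induction v using Quotient.ind
    exact T.asymm _ _
  · intro a b c d hab hcd h1 h2 h3
    induction a using Quotient.ind
    induction b using Quotient.ind
    induction c using Quotient.ind
    induction d using Quotient.ind
    exact T.even _ _ _ _ (fun h => hab (congrArg _ h)) (fun h => hcd (congrArg _ h))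
      h1 h2 h3
  · intro f hf
    have key : ∀ x y : V, s.r x y ↔ s.r (f x) (f y) := by
      intro x y
      rw [hs, hs]
      constructor
      · exact canSim_auto T f hf
      · intro h
        have := canSim_auto T f.symm (by
          intro u v
          have := hf (f.symm u) (f.symm v)
          simpa using this.symm) h
        simpa using this
    refine ⟨Quotient.congr f key, fun u => rfl, ?_⟩
    intro p q
    induction p using Quotient.ind
    induction q using Quotient.ind
    exact hf _ _
end

section
/- Let A be a semigeneric tournament with parts A₁,…,A_k and let ∼ be its canonical equivalence relation. If A is saturated (∼ has exactly k·2^{k-1} classes), then the quotient A/∼ is saturated as well. -/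
/-!
Two vertices of the quotient `A/∼` that are `∼`-equivalent there have representatives in the
same part which, away from their own part (where `∼`-inequivalence lets edges pass to the
quotient unchanged), are joined to every vertex in the same direction. So the representatives
are already `∼`-equivalent in `A`: the canonical equivalence of `A/∼` is trivial, and `A/∼` has
as many classes as `A`.
-/

theorem eq_of_canSim_quotient {V P : Type*} {T : Semigeneric V P} {s : Setoid V}
    (hs : ∀ x y, s.r x y ↔ canSim T x y) {T' : Semigeneric (Quotient s) P}
    (hpart : ∀ u, T'.part (Quotient.mk s u) = T.part u)
    (hE : ∀ u v, ¬ canSim T u v → (T'.E (Quotient.mk s u) (Quotient.mk s v) ↔ T.E u v))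
    {x y : Quotient s} (h : canSim T' x y) : x = y := by
  induction x using Quotient.inductionOn with | h u => ?_
  induction y using Quotient.inductionOn with | h v => ?_
  obtain ⟨hp, hw⟩ := h
  rw [hpart, hpart] at hp
  refine Quotient.sound ((hs u v).mpr ⟨hp, fun w hwu => ?_⟩)
  have hnu : ¬ canSim T u w := fun hc => hwu hc.1.symm
  have hnv : ¬ canSim T v w := fun hc => hwu (hp ▸ hc.1.symm)
  rw [← hE u w hnu, ← hE v w hnv]
  exact hw _ (by rwa [hpart, hpart])

theorem Setoid.natCard_quotient_of_rel_imp_eq {α : Type*} (s : Setoid α)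
    (h : ∀ x y, s.r x y → x = y) : Nat.card (Quotient s) = Nat.card α :=
  (Nat.card_eq_of_bijective _
    ⟨fun x y hxy => h x y (Quotient.exact hxy), Quotient.exists_rep⟩).symm

theorem stmt10_general {V : Type*} (k : ℕ) (T : Semigeneric V (Fin k))
    (s : Setoid V) (hs : ∀ x y, s.r x y ↔ canSim T x y)
    (T' : Semigeneric (Quotient s) (Fin k))
    (hpart : ∀ u, T'.part (Quotient.mk s u) = T.part u)
    (hE : ∀ u v, ¬ canSim T u v →
      (T'.E (Quotient.mk s u) (Quotient.mk s v) ↔ T.E u v))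
    (s' : Setoid (Quotient s)) (hs' : ∀ x y, s'.r x y ↔ canSim T' x y)
    (hsat : Nat.card (Quotient s) = k * 2 ^ (k - 1)) :
    Nat.card (Quotient s') = k * 2 ^ (k - 1) := by
  rw [Setoid.natCard_quotient_of_rel_imp_eq s' fun x y hxy =>
    eq_of_canSim_quotient hs hpart hE ((hs' x y).mp hxy)]
  exact hsat

theorem stmt10 {V : Type*} [Finite V] (k : ℕ) (T : Semigeneric V (Fin k))
    (hsurj : Function.Surjective T.part)
    (s : Setoid V) (hs : ∀ x y, s.r x y ↔ canSim T x y)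
    (T' : Semigeneric (Quotient s) (Fin k))
    (hpart : ∀ u, T'.part (Quotient.mk s u) = T.part u)
    (hE : ∀ u v, ¬ canSim T u v →
      (T'.E (Quotient.mk s u) (Quotient.mk s v) ↔ T.E u v))
    (s' : Setoid (Quotient s)) (hs' : ∀ x y, s'.r x y ↔ canSim T' x y)
    (hsat : Nat.card (Quotient s) = k * 2 ^ (k - 1)) :
    Nat.card (Quotient s') = k * 2 ^ (k - 1) :=
  stmt10_general k T s hs T' hpart hE s' hs' hsat
end

section
/- Let A be a semigeneric tournament with k parts A₁,…,A_k. The following are equivalent: (a) A is saturated (the canonical equivalence ∼ has exactly k·2^{k-1} classes); (b) for every i, every choice of vertices v_j ∈ A_j for j ≠ i, and every function f : {1,…,k}\{i} → {0,1}, there is a vertex v ∈ A_i such that for each j ≠ i the edge between v and v_j is oriented from v to v_j iff f(j) = 0. -/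
lemma eInd_le_one (p : Prop) : eInd p ≤ 1 := by
  unfold eInd; split <;> simp

lemma eInd_eq_eInd_iff {p q : Prop} : eInd p = eInd q ↔ (p ↔ q) := by
  unfold eInd; split <;> split <;> simp_all

lemma Nat.card_subtype_apply_eq_false {P : Type*} [Fintype P] [DecidableEq P] (i : P) :
    Nat.card {g : P → Bool // g i = false} = 2 ^ (Fintype.card P - 1) := by
  have e : {g : P → Bool // g i = false} ≃ {b : Bool // b = false} × ({j // j ≠ i} → Bool) :=
    ((Equiv.funSplitAt i Bool).subtypeEquiv fun _ => Iff.rfl).trans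
      (Equiv.prodSubtypeFstEquivSubtypeProd (p := fun b : Bool => b = false))
  rw [Nat.card_congr e]
  simp [Nat.card_eq_fintype_card, Fintype.card_subtype_compl]

lemma Nat.card_setOf_snd_apply_fst_eq_false (P : Type*) [Fintype P] [DecidableEq P] :
    Nat.card {p : P × (P → Bool) | p.2 p.1 = false} =
      Fintype.card P * 2 ^ (Fintype.card P - 1) := by
  rw [Set.coe_ofPred, Nat.card_congr
    (Equiv.subtypeProdEquivSigmaSubtype fun i (g : P → Bool) => g i = false), Nat.card_sigma]
  simp_rw [← Nat.card_eq_fintype_card, Nat.card_subtype_apply_eq_false]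
  simp

namespace Semigeneric

variable {V P : Type*} (T : Semigeneric V P)

/-- This is the whole content of the parity condition. -/
lemma agree_iff_agree_s11 {x y w w' : V} (hxy : T.part x = T.part y)
    (hww' : T.part w = T.part w') (hwx : T.part w ≠ T.part x) :
    (T.E x w ↔ T.E y w) ↔ (T.E x w' ↔ T.E y w') := by
  rcases eq_or_ne x y with rfl | hne_xy
  · simp
  rcases eq_or_ne w w' with rfl | hne_ww'
  · rfl
  obtain ⟨m, hm⟩ := T.even x y w w' hne_xy hne_ww' hxy hww' (Ne.symm hwx)
  rw [← @eInd_eq_eInd_iff (T.E x w), ← @eInd_eq_eInd_iff (T.E x w')]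
  have := eInd_le_one (T.E x w); have := eInd_le_one (T.E y w)
  have := eInd_le_one (T.E x w'); have := eInd_le_one (T.E y w')
  omega

def IsTransversal (v : P → V) : Prop := ∀ j, T.part (v j) = j

open Classical in
noncomputable def profile (v : P → V) (x : V) : P → Bool := fun j => decide (T.E x (v j))

noncomputable def signature (v : P → V) (x : V) : P × (P → Bool) := (T.part x, T.profile v x)

def RealizesAllProfiles (v : P → V) : Prop :=
  ∀ i (g : P → Bool), g i = false → ∃ x, T.part x = i ∧ T.profile v x = g

def HasExtensionProperty : Prop :=
  ∀ (i : P) (v : P → V), (∀ j, j ≠ i → T.part (v j) = j) →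
    ∀ f : P → Bool, ∃ w, T.part w = i ∧ ∀ j, j ≠ i → (T.E w (v j) ↔ f j = false)

variable {T}

lemma profile_apply_eq_true {v : P → V} {x : V} {j : P} :
    T.profile v x j = true ↔ T.E x (v j) := by
  simp [profile]

namespace IsTransversal

variable {v : P → V} (hv : T.IsTransversal v)
include hv

lemma profile_part_self (x : V) : T.profile v x (T.part x) = false := by
  simpa [profile] using T.not_edge_same x _ (hv _).symm

lemma canSim_iff_signature_eq {x y : V} :
    canSim T x y ↔ T.signature v x = T.signature v y := by
  simp only [signature, Prod.mk.injEq, funext_iff, canSim]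
  refine and_congr_right fun hxy => ⟨fun h j => ?_, fun h w hw => ?_⟩
  · rcases eq_or_ne j (T.part x) with rfl | hj
    · rw [hv.profile_part_self, hxy, hv.profile_part_self]
    · simpa [profile] using h (v j) (by rwa [hv])
  · have hagree : T.E x (v (T.part w)) ↔ T.E y (v (T.part w)) := by
      simpa [profile] using h (T.part w)
    exact (T.agree_iff_agree_s11 hxy (hv _) (by rwa [hv])).1 hagree

lemma profile_xor_eq {v' : P → V} (hv' : T.IsTransversal v') {x y : V}
    (hxy : T.part x = T.part y) (j : P) :
    (T.profile v x j ^^ T.profile v y j) = (T.profile v' x j ^^ T.profile v' y j) := by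
  rcases eq_or_ne j (T.part x) with rfl | hj
  · rw [hv.profile_part_self, hv'.profile_part_self, hxy, hv.profile_part_self,
      hv'.profile_part_self]
  have hagree := T.agree_iff_agree_s11 hxy ((hv j).trans (hv' j).symm) (by rwa [hv])
  rw [← profile_apply_eq_true, ← profile_apply_eq_true, ← profile_apply_eq_true,
    ← profile_apply_eq_true] at hagree
  revert hagree
  cases T.profile v x j <;> cases T.profile v y j <;> cases T.profile v' x j <;>
    cases T.profile v' y j <;> decide

lemma realizesAllProfiles {v' : P → V} (hv' : T.IsTransversal v')
    (h : T.RealizesAllProfiles v) : T.RealizesAllProfiles v' := by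
  intro i g hgi
  obtain ⟨y, rfl⟩ : ∃ y, T.part y = i := ⟨v' i, hv' i⟩
  -- translate the target by the xor of the two profiles of a fixed vertex `y` of the part
  obtain ⟨x, hx, hxg⟩ := h _ (fun j => g j ^^ (T.profile v' y j ^^ T.profile v y j))
    (by rw [hgi, hv.profile_part_self, hv'.profile_part_self]; rfl)
  refine ⟨x, hx, funext fun j => ?_⟩
  have hxy := hv.profile_xor_eq hv' hx j
  rw [congrFun hxg j] at hxy
  revert hxy
  cases g j <;> cases T.profile v y j <;> cases T.profile v' x j <;>
    cases T.profile v' y j <;> decide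

lemma hasExtensionProperty_iff [DecidableEq P] :
    T.HasExtensionProperty ↔ T.RealizesAllProfiles v := by
  constructor
  · intro h i g hgi
    obtain ⟨w, rfl, hw⟩ := h i v (fun j _ => hv j) (fun j => !g j)
    refine ⟨w, rfl, funext fun j => ?_⟩
    rcases eq_or_ne j (T.part w) with rfl | hj
    · rw [hv.profile_part_self, hgi]
    · rw [Bool.eq_iff_iff, profile_apply_eq_true, hw j hj, Bool.not_eq_false']
  · intro h i u hu f
    have hu' : T.IsTransversal (Function.update u i (v i)) := fun j => by
      rcases eq_or_ne j i with rfl | hj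
      · simp [hv j]
      · simp [hj, hu j hj]
    obtain ⟨w, hw, hwf⟩ :=
      hv.realizesAllProfiles hu' h i (Function.update (fun j => !f j) i false) (by simp)
    refine ⟨w, hw, fun j hj => ?_⟩
    have hwj := congrFun hwf j
    rw [Function.update_of_ne hj, Bool.eq_iff_iff, profile_apply_eq_true,
      Function.update_of_ne hj] at hwj
    rw [hwj, Bool.not_eq_true']

lemma range_signature_subset :
    Set.range (T.signature v) ⊆ {p | p.2 p.1 = false} := by
  rintro _ ⟨x, rfl⟩
  exact hv.profile_part_self x

lemma range_signature_eq_iff :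
    Set.range (T.signature v) = {p | p.2 p.1 = false} ↔ T.RealizesAllProfiles v := by
  refine ⟨fun h i g hgi => ?_, fun h => hv.range_signature_subset.antisymm ?_⟩
  · obtain ⟨x, hx⟩ : (i, g) ∈ Set.range (T.signature v) := h ▸ hgi
    exact ⟨x, congrArg Prod.fst hx, congrArg Prod.snd hx⟩
  · rintro ⟨i, g⟩ hgi
    obtain ⟨x, rfl, rfl⟩ := h i g hgi
    exact ⟨x, rfl⟩

end IsTransversal

end Semigeneric

theorem stmt11_general {V : Type*} (k : ℕ) (T : Semigeneric V (Fin k))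
    (hsurj : Function.Surjective T.part)
    (s : Setoid V) (hs : ∀ x y, s.r x y ↔ canSim T x y) :
    Nat.card (Quotient s) = k * 2 ^ (k - 1) ↔
      ∀ (i : Fin k) (v : Fin k → V), (∀ j, j ≠ i → T.part (v j) = j) →
        ∀ f : Fin k → Bool, ∃ w, T.part w = i ∧
          ∀ j, j ≠ i → (T.E w (v j) ↔ f j = false) := by
  obtain ⟨r, hr⟩ : ∃ r, T.IsTransversal r := ⟨Function.surjInv hsurj, Function.surjInv_eq hsurj⟩
  obtain rfl : s = Setoid.ker (T.signature r) :=
    Setoid.ext fun x y => (hs x y).trans hr.canSim_iff_signature_eq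
  have hcard := Nat.card_setOf_snd_apply_fst_eq_false (Fin k)
  rw [Fintype.card_fin] at hcard
  rw [Nat.card_congr (Setoid.quotientKerEquivRange _), ← hcard]
  calc _ ↔ Set.range (T.signature r) = {p | p.2 p.1 = false} :=
        ⟨fun h => (Set.toFinite _).eq_of_subset_of_card_le hr.range_signature_subset h.ge,
          fun h => by rw [h]⟩
    _ ↔ T.RealizesAllProfiles r := hr.range_signature_eq_iff
    _ ↔ T.HasExtensionProperty := hr.hasExtensionProperty_iff.symm

theorem stmt11 {V : Type*} [Finite V] (k : ℕ) (T : Semigeneric V (Fin k))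
    (hsurj : Function.Surjective T.part)
    (s : Setoid V) (hs : ∀ x y, s.r x y ↔ canSim T x y) :
    Nat.card (Quotient s) = k * 2 ^ (k - 1) ↔
      ∀ (i : Fin k) (v : Fin k → V), (∀ j, j ≠ i → T.part (v j) = j) →
        ∀ f : Fin k → Bool, ∃ w, T.part w = i ∧
          ∀ j, j ≠ i → (T.E w (v j) ↔ f j = false) :=
  stmt11_general k T hsurj s hs
end

section
/- The class of finite ω-partite tournaments has the amalgamation property with automorphisms (APA): given ω-partite tournaments A ⊆ B₁ and A ⊆ B₂ with B₁ ∩ B₂ = A, there is an ω-partite tournament C on B₁ ∪ B₂ extending both B₁ and B₂ such that every pair of automorphisms f₁ of B₁ and f₂ of B₂ agreeing on A extends to a common automorphism f₁ ∪ f₂ of C. -/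
/-- An ω-partite tournament on vertex set `V`: a directed graph (irreflexive,
antisymmetric) in which non-adjacency is an equivalence relation; its classes are the
parts, so any two vertices in different parts are joined by exactly one directed edge
and there are no edges within a part. -/
structure PartiteTournament (V : Type*) where
  E : V → V → Prop
  asymm : ∀ u v, E u v → ¬ E v u
  nonadj_equiv : Equivalence (fun u v => ¬ E u v ∧ ¬ E v u)

/-!
The amalgam `C` is built on the ambient type: inside `B₁` and inside `B₂` it keeps the given
edges, and a vertex of `B₁ \ B₂` points to a vertex of `B₂ \ B₁` unless the two are in the same
merged part. Two vertices are in the same merged part when they are joined by at most two steps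
of "same part in `B₁`" or "same part in `B₂`"; this is already transitive, because in an
alternating chain of three steps the middle step joins two vertices of `A = B₁ ∩ B₂`, where the
two tournaments agree. The construction only mentions `B₁`, `B₂` and the two edge relations, so
any permutation of the vertices preserving both tournaments preserves `C`. Finally `f₁` and `f₂`
glue to such a permutation: `f₁` maps `A` into `A`, hence onto `A` by finiteness, so `f₁` never
sends a vertex of `B₁ \ A` into `B₂`, and symmetrically for `f₂`.
-/

open Function Set

theorem Set.Finite.apply_mem_iff_of_mapsTo {α : Type*} {f : α → α} {s : Set α} (hs : s.Finite)
    (hmaps : MapsTo f s s) (hf : Injective f) {x : α} : f x ∈ s ↔ x ∈ s := by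
  refine ⟨fun hx => ?_, fun hx => hmaps hx⟩
  obtain ⟨a, ha, hax⟩ := ((hs.injOn_iff_bijOn_of_mapsTo hmaps).1 hf.injOn).surjOn hx
  exact hf hax ▸ ha

namespace PartiteTournament

variable {V : Type*}

section Ambient

variable {B : Set V} (T : PartiteTournament B)

def Adj (u v : V) : Prop :=
  ∃ (hu : u ∈ B) (hv : v ∈ B), T.E ⟨u, hu⟩ ⟨v, hv⟩

def SamePart (u v : V) : Prop :=
  u ∈ B ∧ v ∈ B ∧ ¬ T.Adj u v ∧ ¬ T.Adj v u

variable {T} {u v w : V}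

theorem adj_iff (hu : u ∈ B) (hv : v ∈ B) : T.Adj u v ↔ T.E ⟨u, hu⟩ ⟨v, hv⟩ :=
  ⟨fun ⟨_, _, h⟩ => h, fun h => ⟨hu, hv, h⟩⟩

theorem Adj.asymm (h : T.Adj u v) : ¬ T.Adj v u := by
  obtain ⟨_, _, h⟩ := h
  rintro ⟨_, _, h'⟩
  exact T.asymm _ _ h h'

theorem samePart_iff (hu : u ∈ B) (hv : v ∈ B) :
    T.SamePart u v ↔ ¬ T.Adj u v ∧ ¬ T.Adj v u := by
  simp only [SamePart, hu, hv, true_and]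

theorem SamePart.refl (hu : u ∈ B) : T.SamePart u u :=
  ⟨hu, hu, fun h => h.asymm h, fun h => h.asymm h⟩

theorem SamePart.symm (h : T.SamePart u v) : T.SamePart v u :=
  ⟨h.2.1, h.1, h.2.2.2, h.2.2.1⟩

theorem SamePart.trans (h : T.SamePart u v) (h' : T.SamePart v w) : T.SamePart u w := by
  obtain ⟨hu, hv, h⟩ := h
  obtain ⟨-, hw, h'⟩ := h'
  refine ⟨hu, hw, ?_⟩
  simp only [adj_iff hu hv, adj_iff hv hu, adj_iff hv hw, adj_iff hw hv,
    adj_iff hu hw, adj_iff hw hu] at h h' ⊢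
  exact T.nonadj_equiv.trans h h'

def IsInvariantUnder (T : PartiteTournament B) (σ : Equiv.Perm V) : Prop :=
  (∀ v, σ v ∈ B ↔ v ∈ B) ∧ ∀ u v, T.Adj (σ u) (σ v) ↔ T.Adj u v

theorem IsInvariantUnder.of_extends {σ : Equiv.Perm V} {f : B ≃ B}
    (hσ : ∀ v (hv : v ∈ B), σ v = f ⟨v, hv⟩) (hσB : ∀ v, σ v ∈ B ↔ v ∈ B)
    (hf : ∀ x y, T.E (f x) (f y) ↔ T.E x y) : T.IsInvariantUnder σ := by
  refine ⟨hσB, fun u v => ?_⟩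
  by_cases huv : u ∈ B ∧ v ∈ B
  · obtain ⟨hu, hv⟩ := huv
    rw [hσ u hu, hσ v hv, adj_iff (f _).2 (f _).2, adj_iff hu hv]
    exact hf _ _
  · exact iff_of_false (fun ⟨hu, hv, _⟩ => huv ⟨(hσB u).1 hu, (hσB v).1 hv⟩)
      (fun ⟨hu, hv, _⟩ => huv ⟨hu, hv⟩)

theorem IsInvariantUnder.samePart_iff {σ : Equiv.Perm V} (h : T.IsInvariantUnder σ) :
    T.SamePart (σ u) (σ v) ↔ T.SamePart u v := by
  simp only [SamePart, h.1, h.2]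

end Ambient

section Amalgam

variable {B₁ B₂ : Set V} (T₁ : PartiteTournament B₁) (T₂ : PartiteTournament B₂)

def SamePartInEither (u v : V) : Prop :=
  T₁.SamePart u v ∨ T₂.SamePart u v

def AmalgamSamePart : V → V → Prop :=
  Relation.Comp (SamePartInEither T₁ T₂) (SamePartInEither T₁ T₂)

def AmalgamAdj (u v : V) : Prop :=
  T₁.Adj u v ∨ T₂.Adj u v ∨ (u ∈ B₁ \ B₂ ∧ v ∈ B₂ \ B₁ ∧ ¬ AmalgamSamePart T₁ T₂ u v)

variable {T₁ T₂} {u v w x : V}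

theorem SamePartInEither.symm (h : SamePartInEither T₁ T₂ u v) : SamePartInEither T₁ T₂ v u :=
  h.imp SamePart.symm SamePart.symm

theorem amalgamSamePart_refl (hu : u ∈ B₁ ∪ B₂) : AmalgamSamePart T₁ T₂ u u := by
  rcases hu with hu | hu
  · exact ⟨u, .inl (.refl hu), .inl (.refl hu)⟩
  · exact ⟨u, .inr (.refl hu), .inr (.refl hu)⟩

theorem AmalgamSamePart.symm (h : AmalgamSamePart T₁ T₂ u v) : AmalgamSamePart T₁ T₂ v u :=
  let ⟨w, huw, hwv⟩ := h
  ⟨w, hwv.symm, huw.symm⟩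

theorem amalgamAdj_iff_of_mem_sdiff (hu : u ∈ B₁ \ B₂) (hv : v ∈ B₂ \ B₁) :
    AmalgamAdj T₁ T₂ u v ↔ ¬ AmalgamSamePart T₁ T₂ u v := by
  refine ⟨?_, fun h => .inr (.inr ⟨hu, hv, h⟩)⟩
  rintro (h | h | h)
  · exact absurd h.2.1 hv.2
  · exact absurd h.1 hu.2
  · exact h.2.2

theorem not_amalgamAdj_of_mem_sdiff (hu : u ∈ B₁ \ B₂) (hv : v ∈ B₂ \ B₁) :
    ¬ AmalgamAdj T₁ T₂ v u := by
  rintro (h | h | h)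
  · exact hv.2 h.1
  · exact hu.2 h.2.1
  · exact hv.2 h.1.1

section Compatible

variable (hagree : ∀ (u v : V) (hu₁ : u ∈ B₁) (hu₂ : u ∈ B₂) (hv₁ : v ∈ B₁) (hv₂ : v ∈ B₂),
  T₁.E ⟨u, hu₁⟩ ⟨v, hv₁⟩ ↔ T₂.E ⟨u, hu₂⟩ ⟨v, hv₂⟩)
include hagree

theorem adj_iff_adj_of_mem_inter (hu : u ∈ B₁ ∩ B₂) (hv : v ∈ B₁ ∩ B₂) :
    T₁.Adj u v ↔ T₂.Adj u v := by
  rw [adj_iff hu.1 hv.1, adj_iff hu.2 hv.2]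
  exact hagree u v hu.1 hu.2 hv.1 hv.2

theorem samePart_iff_samePart_of_mem_inter (hu : u ∈ B₁ ∩ B₂) (hv : v ∈ B₁ ∩ B₂) :
    T₁.SamePart u v ↔ T₂.SamePart u v := by
  rw [samePart_iff hu.1 hv.1, samePart_iff hu.2 hv.2, adj_iff_adj_of_mem_inter hagree hu hv,
    adj_iff_adj_of_mem_inter hagree hv hu]

theorem amalgamSamePart_of_three (h₁ : SamePartInEither T₁ T₂ u w)
    (h₂ : SamePartInEither T₁ T₂ w x) (h₃ : SamePartInEither T₁ T₂ x v) :
    AmalgamSamePart T₁ T₂ u v := by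
  rcases h₁ with h₁ | h₁ <;> rcases h₂ with h₂ | h₂
  · exact ⟨x, .inl (h₁.trans h₂), h₃⟩
  · rcases h₃ with h₃ | h₃
    · have h₂' := (samePart_iff_samePart_of_mem_inter hagree ⟨h₁.2.1, h₂.1⟩ ⟨h₃.1, h₂.2.1⟩).2 h₂
      exact ⟨x, .inl (h₁.trans h₂'), .inl h₃⟩
    · exact ⟨w, .inl h₁, .inr (h₂.trans h₃)⟩
  · rcases h₃ with h₃ | h₃
    · exact ⟨w, .inr h₁, .inl (h₂.trans h₃)⟩
    · have h₂' := (samePart_iff_samePart_of_mem_inter hagree ⟨h₂.1, h₁.2.1⟩ ⟨h₂.2.1, h₃.1⟩).1 h₂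
      exact ⟨x, .inr (h₁.trans h₂'), .inr h₃⟩
  · exact ⟨x, .inr (h₁.trans h₂), h₃⟩

theorem AmalgamSamePart.trans (h : AmalgamSamePart T₁ T₂ u v)
    (h' : AmalgamSamePart T₁ T₂ v w) : AmalgamSamePart T₁ T₂ u w := by
  obtain ⟨a, hua, hav⟩ := h
  obtain ⟨b, hvb, hbw⟩ := h'
  obtain ⟨c, huc, hcb⟩ := amalgamSamePart_of_three hagree hua hav hvb
  exact amalgamSamePart_of_three hagree huc hcb hbw

theorem AmalgamSamePart.samePart_left (h : AmalgamSamePart T₁ T₂ u v) (hu : u ∈ B₁)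
    (hv : v ∈ B₁) : T₁.SamePart u v := by
  obtain ⟨w, h₁ | h₁, h₂ | h₂⟩ := h
  · exact h₁.trans h₂
  · exact h₁.trans ((samePart_iff_samePart_of_mem_inter hagree ⟨h₁.2.1, h₂.1⟩ ⟨hv, h₂.2.1⟩).2 h₂)
  · exact ((samePart_iff_samePart_of_mem_inter hagree ⟨hu, h₁.1⟩ ⟨h₂.1, h₁.2.1⟩).2 h₁).trans h₂
  · exact (samePart_iff_samePart_of_mem_inter hagree ⟨hu, h₁.1⟩ ⟨hv, h₂.2.1⟩).2 (h₁.trans h₂)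

theorem AmalgamSamePart.samePart_right (h : AmalgamSamePart T₁ T₂ u v) (hu : u ∈ B₂)
    (hv : v ∈ B₂) : T₂.SamePart u v := by
  obtain ⟨w, h₁ | h₁, h₂ | h₂⟩ := h
  · exact (samePart_iff_samePart_of_mem_inter hagree ⟨h₁.1, hu⟩ ⟨h₂.2.1, hv⟩).1 (h₁.trans h₂)
  · exact ((samePart_iff_samePart_of_mem_inter hagree ⟨h₁.1, hu⟩ ⟨h₁.2.1, h₂.1⟩).1 h₁).trans h₂
  · exact h₁.trans ((samePart_iff_samePart_of_mem_inter hagree ⟨h₂.1, h₁.2.1⟩ ⟨h₂.2.1, hv⟩).1 h₂)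
  · exact h₁.trans h₂

theorem amalgamAdj_iff_left (hu : u ∈ B₁) (hv : v ∈ B₁) :
    AmalgamAdj T₁ T₂ u v ↔ T₁.Adj u v := by
  refine ⟨?_, .inl⟩
  rintro (h | h | ⟨-, ⟨-, hv₁⟩, -⟩)
  · exact h
  · exact (adj_iff_adj_of_mem_inter hagree ⟨hu, h.1⟩ ⟨hv, h.2.1⟩).2 h
  · exact absurd hv hv₁

theorem amalgamAdj_iff_right (hu : u ∈ B₂) (hv : v ∈ B₂) :
    AmalgamAdj T₁ T₂ u v ↔ T₂.Adj u v := by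
  refine ⟨?_, fun h => .inr (.inl h)⟩
  rintro (h | h | ⟨⟨-, hu₂⟩, -, -⟩)
  · exact (adj_iff_adj_of_mem_inter hagree ⟨h.1, hu⟩ ⟨h.2.1, hv⟩).1 h
  · exact h
  · exact absurd hu hu₂

theorem AmalgamAdj.asymm (h : AmalgamAdj T₁ T₂ u v) : ¬ AmalgamAdj T₁ T₂ v u := by
  rcases h with h | h | ⟨hu, hv, -⟩
  · rw [amalgamAdj_iff_left hagree h.2.1 h.1]
    exact h.asymm
  · rw [amalgamAdj_iff_right hagree h.2.1 h.1]
    exact h.asymm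
  · exact not_amalgamAdj_of_mem_sdiff hu hv

theorem not_amalgamAdj_iff (hu : u ∈ B₁ ∪ B₂) (hv : v ∈ B₁ ∪ B₂) :
    ¬ AmalgamAdj T₁ T₂ u v ∧ ¬ AmalgamAdj T₁ T₂ v u ↔ AmalgamSamePart T₁ T₂ u v := by
  have hcases : (u ∈ B₁ ∧ v ∈ B₁) ∨ (u ∈ B₂ ∧ v ∈ B₂) ∨ (u ∈ B₁ \ B₂ ∧ v ∈ B₂ \ B₁) ∨
      (v ∈ B₁ \ B₂ ∧ u ∈ B₂ \ B₁) := by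
    simp only [mem_union, mem_sdiff] at hu hv ⊢
    tauto
  rcases hcases with ⟨hu₁, hv₁⟩ | ⟨hu₂, hv₂⟩ | ⟨hu', hv'⟩ | ⟨hv', hu'⟩
  · rw [amalgamAdj_iff_left hagree hu₁ hv₁, amalgamAdj_iff_left hagree hv₁ hu₁,
      ← samePart_iff hu₁ hv₁]
    exact ⟨fun h => ⟨v, .inl h, .inl (.refl hv₁)⟩, fun h => h.samePart_left hagree hu₁ hv₁⟩
  · rw [amalgamAdj_iff_right hagree hu₂ hv₂, amalgamAdj_iff_right hagree hv₂ hu₂,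
      ← samePart_iff hu₂ hv₂]
    exact ⟨fun h => ⟨v, .inr h, .inr (.refl hv₂)⟩, fun h => h.samePart_right hagree hu₂ hv₂⟩
  · rw [amalgamAdj_iff_of_mem_sdiff hu' hv', not_not]
    exact ⟨And.left, fun h => ⟨h, not_amalgamAdj_of_mem_sdiff hu' hv'⟩⟩
  · rw [amalgamAdj_iff_of_mem_sdiff hv' hu', not_not]
    exact ⟨fun h => h.2.symm, fun h => ⟨not_amalgamAdj_of_mem_sdiff hv' hu', h.symm⟩⟩

variable (T₁ T₂) in
def amalgam : PartiteTournament ↥(B₁ ∪ B₂) where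
  E x y := AmalgamAdj T₁ T₂ x y
  asymm _ _ := AmalgamAdj.asymm hagree
  nonadj_equiv := by
    have hequiv : Equivalence (fun x y : ↥(B₁ ∪ B₂) => AmalgamSamePart T₁ T₂ x y) :=
      ⟨fun x => amalgamSamePart_refl x.2, AmalgamSamePart.symm, (·.trans hagree ·)⟩
    convert hequiv using 1
    funext x y
    exact propext (not_amalgamAdj_iff hagree x.2 y.2)

theorem amalgam_E_left (hu : u ∈ B₁) (hv : v ∈ B₁) :
    (amalgam T₁ T₂ hagree).E ⟨u, mem_union_left _ hu⟩ ⟨v, mem_union_left _ hv⟩ ↔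
      T₁.E ⟨u, hu⟩ ⟨v, hv⟩ :=
  (amalgamAdj_iff_left hagree hu hv).trans (adj_iff hu hv)

theorem amalgam_E_right (hu : u ∈ B₂) (hv : v ∈ B₂) :
    (amalgam T₁ T₂ hagree).E ⟨u, mem_union_right _ hu⟩ ⟨v, mem_union_right _ hv⟩ ↔
      T₂.E ⟨u, hu⟩ ⟨v, hv⟩ :=
  (amalgamAdj_iff_right hagree hu hv).trans (adj_iff hu hv)

end Compatible

variable {σ : Equiv.Perm V}

theorem amalgamSamePart_perm_iff (h₁ : T₁.IsInvariantUnder σ) (h₂ : T₂.IsInvariantUnder σ) :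
    AmalgamSamePart T₁ T₂ (σ u) (σ v) ↔ AmalgamSamePart T₁ T₂ u v := by
  simp only [AmalgamSamePart, Relation.Comp, SamePartInEither]
  rw [σ.surjective.exists]
  simp only [h₁.samePart_iff, h₂.samePart_iff]

theorem amalgamAdj_perm_iff (h₁ : T₁.IsInvariantUnder σ) (h₂ : T₂.IsInvariantUnder σ) :
    AmalgamAdj T₁ T₂ (σ u) (σ v) ↔ AmalgamAdj T₁ T₂ u v := by
  simp only [AmalgamAdj, mem_sdiff, h₁.1, h₂.1, h₁.2, h₂.2, amalgamSamePart_perm_iff h₁ h₂]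

end Amalgam

end PartiteTournament

namespace Equiv

variable {V : Type*}

theorem coe_apply_mem_iff_of_agree [Finite V] {B B' : Set V} (f : B ≃ B) (f' : B' ≃ B')
    (hagree : ∀ (u : V) (hu : u ∈ B) (hu' : u ∈ B'), (f ⟨u, hu⟩ : V) = f' ⟨u, hu'⟩) (x : B) :
    (f x : V) ∈ B' ↔ (x : V) ∈ B' :=
  (toFinite {x : B | (x : V) ∈ B'}).apply_mem_iff_of_mapsTo
    (fun x hx => by simp only [mem_ofPred_eq, hagree x x.2 hx, Subtype.coe_prop]) f.injective

variable {B₁ B₂ : Set V} (f₁ : B₁ ≃ B₁) (f₂ : B₂ ≃ B₂)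

open Classical in
noncomputable def glue (v : V) : V :=
  if hv₁ : v ∈ B₁ then f₁ ⟨v, hv₁⟩ else if hv₂ : v ∈ B₂ then f₂ ⟨v, hv₂⟩ else v

variable {f₁ f₂} (hcomp : ∀ (u : V) (hu₁ : u ∈ B₁) (hu₂ : u ∈ B₂),
  (f₁ ⟨u, hu₁⟩ : V) = (f₂ ⟨u, hu₂⟩ : V))

theorem glue_of_mem_left {v : V} (hv : v ∈ B₁) : glue f₁ f₂ v = f₁ ⟨v, hv⟩ :=
  dif_pos hv

include hcomp

theorem glue_of_mem_right {v : V} (hv : v ∈ B₂) : glue f₁ f₂ v = f₂ ⟨v, hv⟩ := by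
  by_cases hv₁ : v ∈ B₁
  · rw [glue_of_mem_left hv₁, hcomp v hv₁ hv]
  · rw [glue, dif_neg hv₁, dif_pos hv]

variable [Finite V]

theorem glue_mem_iff (v : V) :
    (glue f₁ f₂ v ∈ B₁ ↔ v ∈ B₁) ∧ (glue f₁ f₂ v ∈ B₂ ↔ v ∈ B₂) := by
  by_cases hv₁ : v ∈ B₁
  · rw [glue_of_mem_left hv₁]
    exact ⟨iff_of_true (f₁ _).2 hv₁, f₁.coe_apply_mem_iff_of_agree f₂ hcomp _⟩
  by_cases hv₂ : v ∈ B₂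
  · rw [glue_of_mem_right hcomp hv₂]
    exact ⟨f₂.coe_apply_mem_iff_of_agree f₁ (fun u hu₂ hu₁ => (hcomp u hu₁ hu₂).symm) _,
      iff_of_true (f₂ _).2 hv₂⟩
  · rw [glue, dif_neg hv₁, dif_neg hv₂]
    exact ⟨Iff.rfl, Iff.rfl⟩

theorem glue_injective : Injective (glue f₁ f₂) := by
  intro u v huv
  have hmem := glue_mem_iff hcomp
  by_cases hu₁ : u ∈ B₁
  · have hv₁ : v ∈ B₁ := (hmem v).1.1 (huv ▸ (hmem u).1.2 hu₁)
    rw [glue_of_mem_left hu₁, glue_of_mem_left hv₁] at huv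
    exact congrArg Subtype.val (f₁.injective (Subtype.ext huv))
  by_cases hu₂ : u ∈ B₂
  · have hv₂ : v ∈ B₂ := (hmem v).2.1 (huv ▸ (hmem u).2.2 hu₂)
    rw [glue_of_mem_right hcomp hu₂, glue_of_mem_right hcomp hv₂] at huv
    exact congrArg Subtype.val (f₂.injective (Subtype.ext huv))
  have hv₁ : v ∉ B₁ := fun hv₁ => hu₁ ((hmem u).1.1 (huv ▸ (hmem v).1.2 hv₁))
  have hv₂ : v ∉ B₂ := fun hv₂ => hu₂ ((hmem u).2.1 (huv ▸ (hmem v).2.2 hv₂))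
  simpa only [glue, dif_neg hu₁, dif_neg hu₂, dif_neg hv₁, dif_neg hv₂] using huv

noncomputable def gluePerm : Equiv.Perm V :=
  Equiv.ofBijective (glue f₁ f₂) (Finite.injective_iff_bijective.1 (glue_injective hcomp))

end Equiv

open PartiteTournament Equiv in
/-- APA for finite ω-partite tournaments: given ω-partite tournaments `A ⊆ B₁`, `A ⊆ B₂`
with `B₁ ∩ B₂ = A` (agreement on the intersection), there is an ω-partite tournament `C`
on `B₁ ∪ B₂` extending both, such that any automorphisms `f₁` of `B₁` and `f₂` of `B₂`
agreeing on `A` extend to a common automorphism of `C`. -/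
theorem stmt13 {V : Type*} [Finite V] (B₁ B₂ : Set V)
    (T₁ : PartiteTournament B₁) (T₂ : PartiteTournament B₂)
    (hagree : ∀ (u v : V) (hu₁ : u ∈ B₁) (hu₂ : u ∈ B₂) (hv₁ : v ∈ B₁) (hv₂ : v ∈ B₂),
      T₁.E ⟨u, hu₁⟩ ⟨v, hv₁⟩ ↔ T₂.E ⟨u, hu₂⟩ ⟨v, hv₂⟩) :
    ∃ T : PartiteTournament ↥(B₁ ∪ B₂),
      (∀ (u v : V) (hu : u ∈ B₁) (hv : v ∈ B₁),
        T.E ⟨u, Set.mem_union_left _ hu⟩ ⟨v, Set.mem_union_left _ hv⟩ ↔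
          T₁.E ⟨u, hu⟩ ⟨v, hv⟩) ∧
      (∀ (u v : V) (hu : u ∈ B₂) (hv : v ∈ B₂),
        T.E ⟨u, Set.mem_union_right _ hu⟩ ⟨v, Set.mem_union_right _ hv⟩ ↔
          T₂.E ⟨u, hu⟩ ⟨v, hv⟩) ∧
      ∀ (f₁ : B₁ ≃ B₁) (f₂ : B₂ ≃ B₂),
        (∀ u v, T₁.E (f₁ u) (f₁ v) ↔ T₁.E u v) →
        (∀ u v, T₂.E (f₂ u) (f₂ v) ↔ T₂.E u v) →
        (∀ (u : V) (hu₁ : u ∈ B₁) (hu₂ : u ∈ B₂),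
          (f₁ ⟨u, hu₁⟩ : V) = (f₂ ⟨u, hu₂⟩ : V)) →
        ∃ F : ↥(B₁ ∪ B₂) ≃ ↥(B₁ ∪ B₂),
          (∀ u v, T.E (F u) (F v) ↔ T.E u v) ∧
          (∀ (u : V) (hu : u ∈ B₁),
            (F ⟨u, Set.mem_union_left _ hu⟩ : V) = (f₁ ⟨u, hu⟩ : V)) ∧
          (∀ (u : V) (hu : u ∈ B₂),
            (F ⟨u, Set.mem_union_right _ hu⟩ : V) = (f₂ ⟨u, hu⟩ : V)) := by
  refine ⟨amalgam T₁ T₂ hagree, fun u v hu hv => amalgam_E_left hagree hu hv,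
    fun u v hu hv => amalgam_E_right hagree hu hv, ?_⟩
  intro f₁ f₂ hf₁ hf₂ hcomp
  let σ := gluePerm hcomp
  have hσ₁ : T₁.IsInvariantUnder σ :=
    .of_extends (fun _ => glue_of_mem_left) (fun v => (glue_mem_iff hcomp v).1) hf₁
  have hσ₂ : T₂.IsInvariantUnder σ :=
    .of_extends (fun _ => glue_of_mem_right hcomp) (fun v => (glue_mem_iff hcomp v).2) hf₂
  refine ⟨σ.subtypeEquiv fun v => by simp only [mem_union, hσ₁.1, hσ₂.1],
    fun u v => amalgamAdj_perm_iff hσ₁ hσ₂, fun u hu => glue_of_mem_left hu,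
    fun u hu => glue_of_mem_right hcomp hu⟩
end

section
/- Fix n ≥ 2 finite. Let B₀ be the directed 4-cycle viewed as a 2-partite tournament (parts being the two diagonal pairs), and let B be the n-partite tournament obtained by adding n−2 singleton parts with all edges oriented from B₀ to the new vertices (and arbitrary orientations among the new vertices). Let f be the automorphism of B fixing the new vertices and rotating the 4-cycle by one step. Then the 1-systems (B, id) and (B, f) have no joint embedding into any 1-system over finite n-partite tournaments: there is no n-partite tournament C with a partial automorphism g and embeddings of both systems. -/
/-- The edge relation of the `n`-partite tournament `B`: the directed 4-cycle `B₀`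
(a 2-partite tournament, parts `{0,2}` and `{1,3}`) together with `n - 2` singleton
parts, all edges oriented from `B₀` to the new vertices, and an arbitrary tournament `t`
among the new vertices. -/
def EB14 (m : ℕ) (t : Fin m → Fin m → Prop) :
    Fin 4 ⊕ Fin m → Fin 4 ⊕ Fin m → Prop
  | Sum.inl a, Sum.inl b => b = a + 1
  | Sum.inl _, Sum.inr _ => True
  | Sum.inr _, Sum.inl _ => False
  | Sum.inr a, Sum.inr b => t a b

/-- The automorphism `f` of `B`: rotate the 4-cycle by one step, fix the new vertices. -/
def f14 (m : ℕ) : Fin 4 ⊕ Fin m → Fin 4 ⊕ Fin m := Sum.map (· + 1) id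

section PartsOfMultipartite

variable {V P : Type*} {E : V → V → Prop} {parts : V → P}

theorem injective_parts_comp_of_pairwise_adj (hP : ∀ u v, parts u = parts v ↔ ¬ E u v ∧ ¬ E v u)
    {ι : Type*} {s : ι → V} (hs : Pairwise fun i j => E (s i) (s j) ∨ E (s j) (s i)) :
    Function.Injective (parts ∘ s) := by
  intro i j hij
  by_contra hne
  have hnonadj := (hP _ _).1 hij
  rcases hs hne with h | h
  exacts [hnonadj.1 h, hnonadj.2 h]

theorem surjective_parts_comp_of_pairwise_adj [Fintype P]
    (hP : ∀ u v, parts u = parts v ↔ ¬ E u v ∧ ¬ E v u) {ι : Type*} [Fintype ι] {s : ι → V}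
    (hs : Pairwise fun i j => E (s i) (s j) ∨ E (s j) (s i))
    (hcard : Fintype.card ι = Fintype.card P) :
    Function.Surjective (parts ∘ s) :=
  ((Fintype.bijective_iff_injective_and_card _).2
    ⟨injective_parts_comp_of_pairwise_adj hP hs, hcard⟩).2

variable {D : Set V} {g : V → V}

theorem parts_map_eq_iff_of_map_eq_self (hP : ∀ u v, parts u = parts v ↔ ¬ E u v ∧ ¬ E v u)
    (hgE : ∀ u ∈ D, ∀ v ∈ D, E (g u) (g v) ↔ E u v) {u w : V} (hu : u ∈ D) (hw : w ∈ D)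
    (hgw : g w = w) :
    parts (g u) = parts w ↔ parts u = parts w :=
  calc parts (g u) = parts w ↔ parts (g u) = parts (g w) := by rw [hgw]
    _ ↔ parts u = parts w := by rw [hP, hP, hgE u hu w hw, hgE w hw u hu]

theorem parts_map_eq_of_forall_exists_fixed
    (hP : ∀ u v, parts u = parts v ↔ ¬ E u v ∧ ¬ E v u)
    (hgE : ∀ u ∈ D, ∀ v ∈ D, E (g u) (g v) ↔ E u v)
    (hfixed : ∀ p, ∃ w ∈ D, g w = w ∧ parts w = p) {u : V} (hu : u ∈ D) :
    parts (g u) = parts u := by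
  obtain ⟨w, hw, hgw, hwu⟩ := hfixed (parts u)
  rw [← hwu]
  exact (parts_map_eq_iff_of_map_eq_self hP hgE hu hw hgw).2 hwu.symm

end PartsOfMultipartite

/-- One vertex from each part of `B`. -/
def transversal14 (m : ℕ) : Fin 2 ⊕ Fin m → Fin 4 ⊕ Fin m :=
  Sum.map (Fin.castLE (by norm_num)) id

theorem EB14_pairwise_adj_transversal14 {m : ℕ} {t : Fin m → Fin m → Prop}
    (ht_total : ∀ a b, a ≠ b → t a b ∨ t b a) :
    Pairwise fun i j => EB14 m t (transversal14 m i) (transversal14 m j) ∨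
      EB14 m t (transversal14 m j) (transversal14 m i) := by
  rintro (a | a) (b | b) hab
  · fin_cases a <;> fin_cases b <;> simp_all [EB14, transversal14]
  · simp [EB14, transversal14]
  · simp [EB14, transversal14]
  · exact ht_total a b fun h => hab (congrArg Sum.inr h)

theorem stmt14_general (n : ℕ) (hn : 2 ≤ n) (t : Fin (n - 2) → Fin (n - 2) → Prop)
    (ht_total : ∀ a b, a ≠ b → t a b ∨ t b a) :
    ¬ ∃ (W : Type) (_ : Finite W) (C : PartiteTournament W) (parts : W → Fin n),
        (∀ u v, parts u = parts v ↔ (¬ C.E u v ∧ ¬ C.E v u)) ∧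
        ∃ (D : Set W) (g : W → W),
          Set.InjOn g D ∧
          (∀ u ∈ D, ∀ v ∈ D, C.E (g u) (g v) ↔ C.E u v) ∧
          ∃ e₁ e₂ : Fin 4 ⊕ Fin (n - 2) → W,
            Function.Injective e₁ ∧ Function.Injective e₂ ∧
            (∀ x y, C.E (e₁ x) (e₁ y) ↔ EB14 (n - 2) t x y) ∧
            (∀ x y, C.E (e₂ x) (e₂ y) ↔ EB14 (n - 2) t x y) ∧
            (∀ x, e₁ x ∈ D ∧ g (e₁ x) = e₁ x) ∧
            (∀ x, e₂ x ∈ D ∧ g (e₂ x) = e₂ (f14 (n - 2) x)) := by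
  rintro ⟨W, -, C, parts, hP, D, g, -, hgE, e₁, e₂, -, -, he₁E, he₂E, he₁D, he₂D⟩
  have hclique : Pairwise fun i j => C.E (e₁ (transversal14 _ i)) (e₁ (transversal14 _ j)) ∨
      C.E (e₁ (transversal14 _ j)) (e₁ (transversal14 _ i)) := by
    simpa only [he₁E] using EB14_pairwise_adj_transversal14 ht_total
  have hmeets := surjective_parts_comp_of_pairwise_adj hP hclique (by simp; omega)
  have hpreserves : ∀ u ∈ D, parts (g u) = parts u := by
    refine fun u hu => parts_map_eq_of_forall_exists_fixed hP hgE (fun p => ?_) hu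
    obtain ⟨i, rfl⟩ := hmeets p
    exact ⟨_, (he₁D _).1, (he₁D _).2, rfl⟩
  have hsame := hpreserves _ (he₂D (Sum.inl 0)).1
  rw [(he₂D _).2] at hsame
  exact ((hP _ _).1 hsame).2 ((he₂E _ _).2 (by simp [EB14, f14]))

/-- The 1-systems `(B, id)` and `(B, f)` have no joint embedding into any 1-system over
finite `n`-partite tournaments. -/
theorem stmt14 (n : ℕ) (hn : 2 ≤ n) (t : Fin (n - 2) → Fin (n - 2) → Prop)
    (ht_total : ∀ a b, a ≠ b → t a b ∨ t b a)
    (ht_asymm : ∀ a b, t a b → ¬ t b a) (ht_irr : ∀ a, ¬ t a a) :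
    ¬ ∃ (W : Type) (_ : Finite W) (C : PartiteTournament W) (parts : W → Fin n),
        (∀ u v, parts u = parts v ↔ (¬ C.E u v ∧ ¬ C.E v u)) ∧
        ∃ (D : Set W) (g : W → W),
          Set.InjOn g D ∧
          (∀ u ∈ D, ∀ v ∈ D, C.E (g u) (g v) ↔ C.E u v) ∧
          ∃ e₁ e₂ : Fin 4 ⊕ Fin (n - 2) → W,
            Function.Injective e₁ ∧ Function.Injective e₂ ∧
            (∀ x y, C.E (e₁ x) (e₁ y) ↔ EB14 (n - 2) t x y) ∧
            (∀ x y, C.E (e₂ x) (e₂ y) ↔ EB14 (n - 2) t x y) ∧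
            (∀ x, e₁ x ∈ D ∧ g (e₁ x) = e₁ x) ∧
            (∀ x, e₂ x ∈ D ∧ g (e₂ x) = e₂ (f14 (n - 2) x)) :=
  stmt14_general n hn t ht_total
end

section
/- Let A = {1,…,n}, partitioned into parts A₁,…,A_k listed in increasing order. Define the n-partite tournament B on pairs (x,χ) with x ∈ A and χ : A \ (part of x) → ℤ/2, where (x,χ) and (x',χ') in different parts are joined by an edge oriented from (x,χ) to (x',χ') iff (x > x' and χ(x') + χ'(x) = 1) or (x < x' and χ(x') + χ'(x) = 0). Then for every part-preserving bijection π of A, the map θ_π((x,χ)) = (π(x), χ^π) with χ^π(π(y)) = 1+χ(y) if x < y and π(x) > π(y), and χ^π(π(y)) = χ(y) otherwise, is an automorphism of B. -/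
/-- Vertices of the EPPA-witness `B` for `n`-partite tournaments: pairs `(x, χ)` with
`x ∈ A` and `χ` a valuation function defined on the vertices outside the part of `x`. -/
abbrev NVert {A P : Type*} (part : A → P) :=
  Σ x : A, ({y : A // part y ≠ part x} → ZMod 2)

/-- The edge relation of `B`: `(x,χ)` and `(x',χ')` in different parts are joined by an
edge oriented from `(x,χ)` to `(x',χ')` iff either `x > x'` and `χ(x') + χ'(x) = 1`, or
`x < x'` and `χ(x') + χ'(x) = 0`. -/
def NEdge {A P : Type*} [LinearOrder A] (part : A → P)
    (p q : NVert part) : Prop :=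
  ∃ h : part p.1 ≠ part q.1,
    (q.1 < p.1 ∧ p.2 ⟨q.1, Ne.symm h⟩ + q.2 ⟨p.1, h⟩ = 1) ∨
    (p.1 < q.1 ∧ p.2 ⟨q.1, Ne.symm h⟩ + q.2 ⟨p.1, h⟩ = 0)

/-- The map `θ_π` for a part-preserving bijection `π`: `(x,χ) ↦ (π x, χ^π)` where
`χ^π(π y) = 1 + χ(y)` if `x < y` and `π x > π y`, and `χ^π(π y) = χ(y)` otherwise. -/
def thetaPiN {A P : Type*} [LinearOrder A] (part : A → P) (π : Equiv.Perm A)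
    (hπ : ∀ x y, part (π x) = part (π y) ↔ part x = part y)
    (p : NVert part) : NVert part :=
  ⟨π p.1, fun y =>
    (if p.1 < π.symm y.1 ∧ y.1 < π p.1 then 1 else 0) +
      p.2 ⟨π.symm y.1, fun h => y.2 (by
        have := (hπ (π.symm y.1) p.1).mpr h
        rwa [Equiv.apply_symm_apply] at this)⟩⟩

/-! Whether `(x, χ) → (x', χ')` is an edge depends only on the label `χ(x') + χ'(x)`: the edge
goes from the larger to the smaller point iff the label is `1`. Under `θ_π` the label of a pair
`{x, x'}` changes by the number of inversions of `π` on it (mod 2), which is exactly how the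
indicator of `x' < x` changes into that of `π x' < π x`. The map is bijective because `χ` is
recovered from `χ^π` by subtracting the same inversion indicators. -/
def inversion {A B : Type*} [LinearOrder A] [LinearOrder B] (f : A → B) (x y : A) : ZMod 2 :=
  if x < y ∧ f y < f x then 1 else 0

theorem ite_map_lt_eq_add_inversion {A B : Type*} [LinearOrder A] [LinearOrder B] (f : A → B)
    {x y : A} (hxy : x ≠ y) (hf : f x ≠ f y) :
    (if f y < f x then 1 else 0 : ZMod 2) =
      (if y < x then 1 else 0) + (inversion f x y + inversion f y x) := by
  rcases hxy.lt_or_gt with h | h <;> rcases hf.lt_or_gt with h' | h' <;>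
    simp [inversion, h, h', h.not_gt, h'.not_gt, CharTwo.add_self_eq_zero]

section

variable {A P : Type*} [LinearOrder A] (part : A → P)

def edgeLabel (p q : NVert part) (h : part p.1 ≠ part q.1) : ZMod 2 :=
  p.2 ⟨q.1, h.symm⟩ + q.2 ⟨p.1, h⟩

theorem nEdge_iff_edgeLabel (p q : NVert part) :
    NEdge part p q ↔ ∃ h, edgeLabel part p q h = if q.1 < p.1 then 1 else 0 := by
  refine exists_congr fun h => ?_
  rcases (ne_of_apply_ne part h).lt_or_gt with hlt | hlt <;>
    simp [edgeLabel, hlt, hlt.not_gt]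

end

section

variable {A P : Type*} [LinearOrder A] {part : A → P} {π : Equiv.Perm A}
  {hπ : ∀ x y, part (π x) = part (π y) ↔ part x = part y}

theorem thetaPiN_snd_apply (p : NVert part) (z : A)
    (hz : part (π z) ≠ part (thetaPiN part π hπ p).1) :
    (thetaPiN part π hπ p).2 ⟨π z, hz⟩ =
      inversion π p.1 z + p.2 ⟨z, fun h => hz ((hπ z p.1).mpr h)⟩ := by
  simp [thetaPiN, inversion]

theorem edgeLabel_thetaPiN (p q : NVert part) (h : part p.1 ≠ part q.1)
    (h' : part (π p.1) ≠ part (π q.1)) :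
    edgeLabel part (thetaPiN part π hπ p) (thetaPiN part π hπ q) h' =
      edgeLabel part p q h + (inversion π p.1 q.1 + inversion π q.1 p.1) :=
  calc edgeLabel part (thetaPiN part π hπ p) (thetaPiN part π hπ q) h'
      _ = (inversion π p.1 q.1 + p.2 ⟨q.1, h.symm⟩) + (inversion π q.1 p.1 + q.2 ⟨p.1, h⟩) :=
        congrArg₂ (· + ·) (thetaPiN_snd_apply ..) (thetaPiN_snd_apply ..)
      _ = _ := by rw [edgeLabel]; ring

theorem thetaPiN_injective : Function.Injective (thetaPiN part π hπ) := by
  rintro ⟨x, χ⟩ ⟨x', χ'⟩ h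
  obtain rfl : x = x' := π.injective (congrArg Sigma.fst h)
  have hχ := eq_of_heq (Sigma.mk.inj h).2
  refine Sigma.ext rfl (heq_of_eq (funext fun ⟨z, hz⟩ => ?_))
  have := congrFun hχ ⟨π z, fun e => hz ((hπ z x).mp e)⟩
  simp only [Equiv.symm_apply_apply] at this
  exact add_left_cancel this

theorem thetaPiN_surjective : Function.Surjective (thetaPiN part π hπ) := by
  rintro ⟨x', ψ⟩
  obtain ⟨x, rfl⟩ := π.surjective x'
  refine ⟨⟨x, fun z => ψ ⟨π z, fun e => z.2 ((hπ z x).mp e)⟩ - inversion π x z⟩,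
    Sigma.ext rfl (heq_of_eq (funext fun ⟨y, hy⟩ => ?_))⟩
  obtain ⟨z, rfl⟩ := π.surjective y
  rw [thetaPiN_snd_apply, add_sub_cancel]
  rfl

theorem thetaPiN_nEdge_iff (p q : NVert part) :
    NEdge part (thetaPiN part π hπ p) (thetaPiN part π hπ q) ↔ NEdge part p q := by
  have key (h : part p.1 ≠ part q.1) (h' : part (π p.1) ≠ part (π q.1)) :
      edgeLabel part (thetaPiN part π hπ p) (thetaPiN part π hπ q) h' =
          (if π q.1 < π p.1 then 1 else 0) ↔
        edgeLabel part p q h = if q.1 < p.1 then 1 else 0 := by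
    rw [edgeLabel_thetaPiN p q h,
      ite_map_lt_eq_add_inversion π (ne_of_apply_ne part h) (ne_of_apply_ne part h')]
    exact add_left_inj _
  rw [nEdge_iff_edgeLabel, nEdge_iff_edgeLabel]
  constructor
  · rintro ⟨h', e⟩
    exact ⟨_, (key ((hπ p.1 q.1).not.mp h') h').mp e⟩
  · rintro ⟨h, e⟩
    exact ⟨_, (key h ((hπ p.1 q.1).not.mpr h)).mpr e⟩

end

theorem stmt15_general {A P : Type*} [LinearOrder A] (part : A → P)
    (π : Equiv.Perm A) (hπ : ∀ x y, part (π x) = part (π y) ↔ part x = part y) :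
    Function.Bijective (thetaPiN part π hπ) ∧
      ∀ p q : NVert part,
        NEdge part (thetaPiN part π hπ p) (thetaPiN part π hπ q) ↔ NEdge part p q :=
  ⟨⟨thetaPiN_injective, thetaPiN_surjective⟩, thetaPiN_nEdge_iff⟩

theorem stmt15 {A P : Type*} [LinearOrder A] [Fintype A] (part : A → P)
    (π : Equiv.Perm A) (hπ : ∀ x y, part (π x) = part (π y) ↔ part x = part y) :
    Function.Bijective (thetaPiN part π hπ) ∧
      ∀ p q : NVert part,
        NEdge part (thetaPiN part π hπ p) (thetaPiN part π hπ q) ↔ NEdge part p q :=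
  stmt15_general part π hπ
end

section
/- In the n-partite tournament B on pairs (x,χ) (x ∈ A, χ : A \ (part of x) → ℤ/2, edge from (x,χ) to (x',χ') iff they are in different parts and either x > x' with χ(x')+χ'(x)=1 or x < x' with χ(x')+χ'(x)=0), for every pair u < v in different parts of A, the map θ_{u,v}((x,χ)) = (x, χ^{u,v}), where χ^{u,v}(y) = 1+χ(y) if {x,y} = {u,v} and χ(y) otherwise, is an automorphism of B. -/
/-- The map `θ_{u,v}`: `(x,χ) ↦ (x, χ^{u,v})` where `χ^{u,v}(y) = 1 + χ(y)` if
`{x,y} = {u,v}` and `χ^{u,v}(y) = χ(y)` otherwise. -/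
def thetaUVN {A P : Type*} [LinearOrder A] (part : A → P) (u v : A)
    (p : NVert part) : NVert part :=
  ⟨p.1, fun y =>
    (if (p.1 = u ∧ y.1 = v) ∨ (p.1 = v ∧ y.1 = u) then 1 else 0) + p.2 y⟩

/-! `θ_{u,v}` adds the same element of `ℤ/2` to `χ(x')` and to `χ'(x)`, because the flip
condition `{x, x'} = {u, v}` is symmetric in `x` and `x'`; in characteristic two the two
additions cancel in `χ(x') + χ'(x)`, and applying `θ_{u,v}` twice is the identity. -/

lemma CharTwo.add_add_add_cancel_left {R : Type*} [CommSemiring R] [CharP R 2] (c a b : R) :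
    (c + a) + (c + b) = a + b := by
  rw [add_add_add_comm, CharTwo.add_self_eq_zero, zero_add]

section ThetaUVN

variable {A P : Type*} [LinearOrder A] (part : A → P) (u v : A)

lemma thetaUVN_involutive : Function.Involutive (thetaUVN part u v) := by
  rintro ⟨x, χ⟩
  refine congrArg (Sigma.mk x) (funext fun y => ?_)
  show (if (x = u ∧ y.1 = v) ∨ (x = v ∧ y.1 = u) then (1 : ZMod 2) else 0) +
    ((if (x = u ∧ y.1 = v) ∨ (x = v ∧ y.1 = u) then 1 else 0) + χ y) = χ y
  exact CharTwo.add_cancel_left _ _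

-- `h` is phrased through `thetaUVN` so that the left side matches `NEdge` of the images verbatim.
lemma thetaUVN_snd_add_snd (p q : NVert part)
    (h : part (thetaUVN part u v p).1 ≠ part (thetaUVN part u v q).1) :
    (thetaUVN part u v p).2 ⟨(thetaUVN part u v q).1, Ne.symm h⟩ +
        (thetaUVN part u v q).2 ⟨(thetaUVN part u v p).1, h⟩ =
      p.2 ⟨q.1, Ne.symm h⟩ + q.2 ⟨p.1, h⟩ := by
  have hflip : ((p.1 = u ∧ q.1 = v) ∨ (p.1 = v ∧ q.1 = u)) ↔
      ((q.1 = u ∧ p.1 = v) ∨ (q.1 = v ∧ p.1 = u)) := by tauto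
  show ((if (p.1 = u ∧ q.1 = v) ∨ (p.1 = v ∧ q.1 = u) then 1 else 0) + _) +
    ((if (q.1 = u ∧ p.1 = v) ∨ (q.1 = v ∧ p.1 = u) then 1 else 0) + _) = _
  rw [if_congr hflip rfl rfl]
  exact CharTwo.add_add_add_cancel_left _ _ _

lemma nEdge_thetaUVN_iff (p q : NVert part) :
    NEdge part (thetaUVN part u v p) (thetaUVN part u v q) ↔ NEdge part p q :=
  exists_congr fun h => by
    rw [thetaUVN_snd_add_snd part u v p q h]
    exact Iff.rfl

end ThetaUVN

theorem stmt16_general {A P : Type*} [LinearOrder A] (part : A → P)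
    (u v : A) :
    Function.Bijective (thetaUVN part u v) ∧
      ∀ p q : NVert part,
        NEdge part (thetaUVN part u v p) (thetaUVN part u v q) ↔ NEdge part p q :=
  ⟨(thetaUVN_involutive part u v).bijective, nEdge_thetaUVN_iff part u v⟩

theorem stmt16 {A P : Type*} [LinearOrder A] [Fintype A] (part : A → P)
    (u v : A) (huv : u < v) (hpart : part u ≠ part v) :
    Function.Bijective (thetaUVN part u v) ∧
      ∀ p q : NVert part,
        NEdge part (thetaUVN part u v p) (thetaUVN part u v q) ↔ NEdge part p q :=
  stmt16_general part u v
end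

section
/- Let A = {1,…,n} with partition A₁,…,A_k (in increasing order) carrying a directed graph structure making it an n-partite tournament T. Define ψ(x) = (x, χ_x) where χ_x(y) = 1 if y < x and there is an edge from x to y in T, and 0 otherwise. Then ψ is an embedding of T into B: for x, y in different parts, there is an edge from x to y in T iff there is an edge from ψ(x) to ψ(y) in B. -/
/-- The embedding `ψ` of an `n`-partite tournament `T` (edge relation `ET` on `A` with
parts given by `part`) into `B`: `ψ(x) = (x, χ_x)` where `χ_x(y) = 1` if `y < x` and
there is an edge from `x` to `y` in `T`, and `0` otherwise. -/
def psiN {A P : Type*} [LinearOrder A] (part : A → P)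
    (ET : A → A → Prop) [DecidableRel ET] (x : A) : NVert part :=
  ⟨x, fun y => if y.1 < x ∧ ET x y.1 then 1 else 0⟩

/-!
For `x < y` in different parts, `χ_x(y) = 0`, so `χ_x(y) + χ_y(x) = 1` exactly when
`T` has the edge `y → x`. Hence `B` has the edge `ψ x → ψ y` iff either `y < x` and
`x → y` in `T`, or `x < y` and not `y → x` in `T`; in a multipartite tournament the
latter is again `x → y`.
-/

theorem nEdge_psiN_iff {A P : Type*} [LinearOrder A] {part : A → P} {ET : A → A → Prop}
    [DecidableRel ET] {x y : A} :
    NEdge part (psiN part ET x) (psiN part ET y) ↔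
      part x ≠ part y ∧ ((y < x ∧ ET x y) ∨ (x < y ∧ ¬ ET y x)) := by
  rw [NEdge, ← exists_prop]
  refine exists_congr fun _ => or_congr (and_congr_right fun (hyx : y < x) => ?_)
    (and_congr_right fun (hxy : x < y) => ?_)
  · by_cases hET : ET x y <;> simp [psiN, hyx, hyx.not_gt, hET]
  · by_cases hET : ET y x <;> simp [psiN, hxy, hxy.not_gt, hET]

theorem stmt17_general {A P : Type*} [LinearOrder A] (part : A → P)
    (ET : A → A → Prop) [DecidableRel ET]
    (h_total : ∀ x y, part x ≠ part y → ET x y ∨ ET y x)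
    (h_asymm : ∀ x y, ET x y → ¬ ET y x) :
    ∀ x y : A, part x ≠ part y →
      (ET x y ↔ NEdge part (psiN part ET x) (psiN part ET y)) := by
  intro x y hxy
  have h_tournament : ET x y ↔ ¬ ET y x :=
    ⟨h_asymm x y, (h_total x y hxy).resolve_right⟩
  have hne : x ≠ y := fun h => hxy (congrArg part h)
  rw [nEdge_psiN_iff, ← h_tournament]
  rcases hne.lt_or_gt with h | h <;> simp [hxy, h, h.not_gt]

theorem stmt17 {A P : Type*} [LinearOrder A] [Fintype A] (part : A → P)
    (ET : A → A → Prop) [DecidableRel ET]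
    (h_same : ∀ x y, part x = part y → ¬ ET x y)
    (h_total : ∀ x y, part x ≠ part y → ET x y ∨ ET y x)
    (h_asymm : ∀ x y, ET x y → ¬ ET y x) :
    ∀ x y : A, part x ≠ part y →
      (ET x y ↔ NEdge part (psiN part ET x) (psiN part ET y)) :=
  stmt17_general part ET h_total h_asymm
end
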